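/- Let x = (x₁,x₂,x₃,x₄) ∈ ℂ⁴ with x_i ≠ 0 for all i, and let n = 1 + |x₁|² + |x₂|² + |x₃|² + |x₄|². Then φ(x, conj x) = |x₁|²|x₂|²|x₃|²|x₄|²/n ≠ 0, all partial derivatives below exist at (x, conj x), and −Σ_{α,β=1}^4 g^{βα}(x) · ( (∂_α∂̄_β φ)(x, conj x)·φ(x, conj x) − (∂_α φ)(x, conj x)·(∂̄_β φ)(x, conj x) ) / φ(x, conj x)² = 4. (This expresses that the mean curvature of the induced metric det H on the determinant line bundle det E(−2), with respect to the Fubini–Study metric, is identically 4, i.e. this metric is Hermitian–Einstein.) -/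

import Mathlib

/-! Where no coordinate vanishes, `log φ = Σ log xᵢ + Σ log yᵢ - log ν`, so
`(∂_α∂̄_β φ · φ - ∂_α φ · ∂̄_β φ) / φ² = ∂_α∂̄_β log φ = -∂_α∂̄_β log ν = -g_{αβ̄}`, minus the
polarized Fubini–Study metric. Since `g^{βα}` is its inverse, the mean curvature is
`Σ g^{βα} g_{αβ̄} = tr 1 = 4`. Concretely, `∂_α φ = φ · (1/x_α - y_α/ν)`, and applying `∂̄_β` to
this product gives `∂̄_β φ · (1/x_α - y_α/ν) - φ · g_{αβ̄}`; the symmetry `φ(x, y) = φ(y, x)`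
reduces `∂̄` to `∂`. -/

noncomputable section

/-- ν(x,y) = 1 + Σ x_i y_i, the polarization of n(x) = 1 + Σ |x_i|². -/
def nu (x y : Fin 4 → ℂ) : ℂ := 1 + ∑ i, x i * y i

/-- The pointwise conjugate vector, y = conj x. -/
def cconj (x : Fin 4 → ℂ) : Fin 4 → ℂ := fun i => star (x i)

/-- φ(x,y) = (x₁y₁·x₂y₂·x₃y₃·x₄y₄)/ν(x,y); φ(x, conj x) = det H(x). -/
def phi (x y : Fin 4 → ℂ) : ℂ :=
  (x 0 * y 0) * (x 1 * y 1) * (x 2 * y 2) * (x 3 * y 3) / nu x y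

/-- ∂_α φ : the complex derivative of t ↦ φ(x + t·e_α, y) at t = 0. -/
def dphi (α : Fin 4) (x y : Fin 4 → ℂ) : ℂ :=
  deriv (fun t : ℂ => phi (x + t • (Pi.single α 1 : Fin 4 → ℂ)) y) 0

/-- ∂̄_β φ : the complex derivative of s ↦ φ(x, y + s·e_β) at s = 0. -/
def dbphi (β : Fin 4) (x y : Fin 4 → ℂ) : ℂ :=
  deriv (fun s : ℂ => phi x (y + s • (Pi.single β 1 : Fin 4 → ℂ))) 0

/-- ∂_α ∂̄_β φ : the mixed second derivative. -/
def ddphi (α β : Fin 4) (x y : Fin 4 → ℂ) : ℂ :=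
  deriv (fun s : ℂ => dphi α x (y + s • (Pi.single β 1 : Fin 4 → ℂ))) 0

/-- g^{βα}(x) = n(x)·(δ_{αβ} + conj(x_β)·x_α), the inverse Fubini–Study
coefficients in the standard affine chart. -/
def gUp (x : Fin 4 → ℂ) (β α : Fin 4) : ℂ :=
  nu x (cconj x) * ((if α = β then 1 else 0) + star (x β) * x α)

section AddSingle

variable {ι : Type*} [Fintype ι] [DecidableEq ι]

theorem sum_add_single_mul {R : Type*} [Semiring R] (x y : ι → R) (α : ι) (t : R) :
    ∑ i, (x + t • (Pi.single α 1 : ι → R)) i * y i = ∑ i, x i * y i + t * y α := by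
  simp only [Pi.add_apply, Pi.smul_apply, smul_eq_mul, add_mul, Finset.sum_add_distrib,
    Pi.single_apply, mul_ite, mul_one, mul_zero, ite_mul, zero_mul, Finset.sum_ite_eq',
    Finset.mem_univ, if_true]

theorem prod_add_single_mul {K : Type*} [Field K] {x : ι → K} (y : ι → K) {α : ι}
    (hα : x α ≠ 0) (t : K) :
    ∏ i, (x + t • (Pi.single α 1 : ι → K)) i * y i = (1 + t / x α) * ∏ i, x i * y i := by
  have hrest : ∀ i ∈ ({α}ᶜ : Finset ι),
      (x + t • (Pi.single α 1 : ι → K)) i * y i = x i * y i := by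
    intro i hi
    have hiα : i ≠ α := by simpa using hi
    simp [hiα]
  rw [Fintype.prod_eq_mul_prod_compl α, Fintype.prod_eq_mul_prod_compl α (fun i => x i * y i),
    Finset.prod_congr rfl hrest]
  simp only [Pi.add_apply, Pi.smul_apply, Pi.single_eq_same, smul_eq_mul, mul_one]
  field_simp

end AddSingle

theorem nu_comm (x y : Fin 4 → ℂ) : nu x y = nu y x := by
  simp only [nu, mul_comm (x _)]

theorem phi_comm (x y : Fin 4 → ℂ) : phi x y = phi y x := by
  simp only [phi, nu_comm x y, mul_comm (x _)]

theorem dbphi_eq_dphi_swap (β : Fin 4) (x y : Fin 4 → ℂ) : dbphi β x y = dphi β y x := by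
  simp only [dbphi, dphi, phi_comm x]

theorem phi_eq_prod_div_nu (x y : Fin 4 → ℂ) : phi x y = (∏ i, x i * y i) / nu x y := by
  rw [phi, Fin.prod_univ_four]

theorem nu_add_single (x y : Fin 4 → ℂ) (α : Fin 4) (t : ℂ) :
    nu (x + t • Pi.single α 1) y = nu x y + t * y α := by
  rw [nu, nu, sum_add_single_mul, add_assoc]

section Derivatives

variable {x y : Fin 4 → ℂ} {α β : Fin 4}

theorem hasDerivAt_phi_add_single (hα : x α ≠ 0) (hν : nu x y ≠ 0) :
    HasDerivAt (fun t : ℂ => phi (x + t • Pi.single α 1) y)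
      (phi x y * ((x α)⁻¹ - y α / nu x y)) 0 := by
  set P := ∏ i, x i * y i with hP
  have hfun : (fun t : ℂ => phi (x + t • Pi.single α 1) y)
      = fun t => (P + t * (P / x α)) / (nu x y + t * y α) := by
    funext t
    rw [phi_eq_prod_div_nu, prod_add_single_mul y hα, nu_add_single]
    ring
  rw [hfun]
  refine (((hasDerivAt_mul_const _).const_add P).div ((hasDerivAt_mul_const _).const_add _)
    (by simpa using hν)).congr_deriv ?_
  rw [phi_eq_prod_div_nu, ← hP]
  simp only [zero_mul, add_zero]
  field_simp

theorem hasDerivAt_phi_add_single_right (hβ : y β ≠ 0) (hν : nu x y ≠ 0) :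
    HasDerivAt (fun s : ℂ => phi x (y + s • Pi.single β 1)) (dbphi β x y) 0 := by
  rw [nu_comm] at hν
  simp only [phi_comm x, dbphi_eq_dphi_swap]
  exact (hasDerivAt_phi_add_single hβ hν).differentiableAt.hasDerivAt

theorem dphi_eq (hα : x α ≠ 0) (hν : nu x y ≠ 0) :
    dphi α x y = phi x y * ((x α)⁻¹ - y α / nu x y) :=
  (hasDerivAt_phi_add_single hα hν).deriv

/-- The polarized Fubini–Study metric `g_{αβ̄} = ∂_α ∂̄_β log ν` of the standard affine chart. -/
def fubiniStudy (x y : Fin 4 → ℂ) (α β : Fin 4) : ℂ :=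
  ((if α = β then 1 else 0) * nu x y - y α * x β) / nu x y ^ 2

theorem hasDerivAt_dphi_add_single_right (hα : x α ≠ 0) (hβ : y β ≠ 0) (hν : nu x y ≠ 0) :
    HasDerivAt (fun s : ℂ => dphi α x (y + s • Pi.single β 1))
      (dbphi β x y * ((x α)⁻¹ - y α / nu x y) - phi x y * fubiniStudy x y α β) 0 := by
  set e : Fin 4 → ℂ := Pi.single β 1 with he
  have hν_shift : HasDerivAt (fun s : ℂ => nu x (y + s • e)) (x β) 0 := by
    simpa only [he, nu_comm x, nu_add_single] using (hasDerivAt_mul_const (x β)).const_add (nu y x)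
  have hy_shift : HasDerivAt (fun s : ℂ => (y + s • e) α) (if α = β then 1 else 0) 0 := by
    simpa only [he, Pi.add_apply, Pi.smul_apply, smul_eq_mul, Pi.single_apply] using
      (hasDerivAt_mul_const (if α = β then (1 : ℂ) else 0)).const_add (y α)
  have hdphi : (fun s : ℂ => dphi α x (y + s • e)) =ᶠ[nhds 0]
      fun s => phi x (y + s • e) * ((x α)⁻¹ - (y + s • e) α / nu x (y + s • e)) := by
    filter_upwards [hν_shift.continuousAt.eventually_ne (by simpa using hν)] with s hs
    exact dphi_eq hα hs
  refine (((hasDerivAt_phi_add_single_right hβ hν).mul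
    ((hy_shift.div hν_shift (by simpa using hν)).const_sub (x α)⁻¹)).congr_of_eventuallyEq
      hdphi).congr_deriv ?_
  simp only [fubiniStudy, Pi.div_apply, zero_smul, add_zero]
  field_simp
  ring

theorem ddphi_mul_phi_sub_dphi_mul_dbphi (hα : x α ≠ 0) (hβ : y β ≠ 0) (hν : nu x y ≠ 0) :
    ddphi α β x y * phi x y - dphi α x y * dbphi β x y = -(phi x y ^ 2 * fubiniStudy x y α β) := by
  rw [ddphi, (hasDerivAt_dphi_add_single_right hα hβ hν).deriv, dphi_eq hα hν]
  ring

end Derivatives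

theorem nu_cconj (x : Fin 4 → ℂ) :
    nu x (cconj x) = ((1 + ‖x 0‖ ^ 2 + ‖x 1‖ ^ 2 + ‖x 2‖ ^ 2 + ‖x 3‖ ^ 2 : ℝ) : ℂ) := by
  simp only [nu, cconj, Fin.sum_univ_four, Complex.star_def, Complex.mul_conj']
  push_cast
  ring

theorem nu_cconj_ne_zero (x : Fin 4 → ℂ) : nu x (cconj x) ≠ 0 := by
  rw [nu_cconj]
  exact_mod_cast (by positivity : (1 + ‖x 0‖ ^ 2 + ‖x 1‖ ^ 2 + ‖x 2‖ ^ 2 + ‖x 3‖ ^ 2 : ℝ) ≠ 0)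

theorem phi_cconj (x : Fin 4 → ℂ) :
    phi x (cconj x) =
      ((‖x 0‖ ^ 2 * ‖x 1‖ ^ 2 * ‖x 2‖ ^ 2 * ‖x 3‖ ^ 2 : ℝ) : ℂ)
        / ((1 + ‖x 0‖ ^ 2 + ‖x 1‖ ^ 2 + ‖x 2‖ ^ 2 + ‖x 3‖ ^ 2 : ℝ) : ℂ) := by
  rw [phi, nu_cconj]
  simp only [cconj, Complex.star_def, Complex.mul_conj']
  push_cast
  rfl

theorem phi_cconj_ne_zero {x : Fin 4 → ℂ} (hx : ∀ i, x i ≠ 0) : phi x (cconj x) ≠ 0 := by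
  rw [phi_eq_prod_div_nu]
  refine div_ne_zero (Finset.prod_ne_zero_iff.mpr fun i _ => ?_) (nu_cconj_ne_zero x)
  exact mul_ne_zero (hx i) (star_ne_zero.mpr (hx i))

theorem sum_gUp_mul_fubiniStudy (x : Fin 4 → ℂ) :
    ∑ α, ∑ β, gUp x β α * fubiniStudy x (cconj x) α β = 4 := by
  have hn := nu_cconj_ne_zero x
  have hnu : nu x (cconj x) = 1 + (x 0 * star (x 0) + x 1 * star (x 1) + x 2 * star (x 2)
      + x 3 * star (x 3)) := by
    simp only [nu, cconj, Fin.sum_univ_four]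
  simp only [gUp, fubiniStudy, Fin.sum_univ_four, cconj, RCLike.star_def, Fin.reduceEq, ↓reduceIte,
    one_mul, zero_mul, zero_add, zero_sub] at hnu ⊢
  field_simp
  rw [hnu]
  ring

theorem horrocks_mumford_stmt14 (x : Fin 4 → ℂ) (hx : ∀ i, x i ≠ 0) :
    phi x (cconj x) =
      ((‖x 0‖ ^ 2 * ‖x 1‖ ^ 2 * ‖x 2‖ ^ 2 * ‖x 3‖ ^ 2 : ℝ) : ℂ)
        / ((1 + ‖x 0‖ ^ 2 + ‖x 1‖ ^ 2 + ‖x 2‖ ^ 2 + ‖x 3‖ ^ 2 : ℝ) : ℂ) ∧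
    phi x (cconj x) ≠ 0 ∧
    (∀ α : Fin 4,
      DifferentiableAt ℂ (fun t : ℂ => phi (x + t • (Pi.single α 1 : Fin 4 → ℂ)) (cconj x)) 0) ∧
    (∀ β : Fin 4,
      DifferentiableAt ℂ (fun s : ℂ => phi x (cconj x + s • (Pi.single β 1 : Fin 4 → ℂ))) 0) ∧
    (∀ α β : Fin 4,
      DifferentiableAt ℂ (fun s : ℂ => dphi α x (cconj x + s • (Pi.single β 1 : Fin 4 → ℂ))) 0) ∧
    -∑ α : Fin 4, ∑ β : Fin 4, gUp x β α *
        (ddphi α β x (cconj x) * phi x (cconj x) - dphi α x (cconj x) * dbphi β x (cconj x))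
          / phi x (cconj x) ^ 2 = 4 := by
  have hy : ∀ i, cconj x i ≠ 0 := fun i => star_ne_zero.mpr (hx i)
  have hν := nu_cconj_ne_zero x
  have hφ := phi_cconj_ne_zero hx
  refine ⟨phi_cconj x, hφ, fun α => (hasDerivAt_phi_add_single (hx α) hν).differentiableAt,
    fun β => (hasDerivAt_phi_add_single_right (hy β) hν).differentiableAt,
    fun α β => (hasDerivAt_dphi_add_single_right (hx α) (hy β) hν).differentiableAt, ?_⟩
  calc -∑ α, ∑ β, gUp x β α *
        (ddphi α β x (cconj x) * phi x (cconj x) - dphi α x (cconj x) * dbphi β x (cconj x))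
          / phi x (cconj x) ^ 2
      = ∑ α, ∑ β, gUp x β α * fubiniStudy x (cconj x) α β := by
        simp only [ddphi_mul_phi_sub_dphi_mul_dbphi (hx _) (hy _) hν, ← Finset.sum_neg_distrib]
        field_simp
    _ = 4 := sum_gUp_mul_fubiniStudy x
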